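/- Let u : ℝ → ℝ be differentiable with continuous derivative and 1-periodic (u(x+1) = u(x) for all x). Let Y be the fundamental solution of the Hill equation with potential u' + u² at spectral parameter μ = 0. Then trace(Y(1)) = 2·cosh(∫₀¹ u(x) dx); that is, Δ_mKdV(0, u) = 2cosh([u]), where [u] = ∫₀¹ u dx is the average of u. -/

import Mathlib

open Complex Matrix

/-- `Y` is the fundamental solution of the Hill equation with potential `v` at spectral
parameter `mu`: `Y' = !![0, 1; v - mu, 0] * Y`, `Y 0 = 1`. -/
def IsHillFund (mu : ℂ) (v : ℝ → ℂ) (Y : ℝ → Matrix (Fin 2) (Fin 2) ℂ) : Prop :=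
  Y 0 = 1 ∧ ∀ (x : ℝ) (i j : Fin 2), HasDerivAt (fun t => Y t i j)
    ((!![0, 1; v x - mu, 0] * Y x) i j) x

/-!
Since `-∂² + u' + u² = -(∂ + u)(∂ - u)`, the function `g = exp (∫₀ˣ u)` solves the Hill equation
at `μ = 0`, and by periodicity of `u` the pair `(g, g')` is multiplied by `e^{[u]}` over a period.
Constancy of Wronskians turns this into the statement that `(-u 0, 1)` is a left eigenvector of the
monodromy matrix `Y 1` with eigenvalue `e^{-[u]}`; as `det (Y 1) = 1`, the other eigenvalue is
`e^{[u]}`, so the trace is `e^{[u]} + e^{-[u]}`.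
-/

theorem wronskian_eq_of_hasDerivAt {A : Type*} [NormedCommRing A] [NormedAlgebra ℝ A]
    {q f f' g g' : ℝ → A}
    (hf : ∀ x, HasDerivAt f (f' x) x) (hf' : ∀ x, HasDerivAt f' (q x * f x) x)
    (hg : ∀ x, HasDerivAt g (g' x) x) (hg' : ∀ x, HasDerivAt g' (q x * g x) x) (a b : ℝ) :
    f a * g' a - f' a * g a = f b * g' b - f' b * g b := by
  have hW : ∀ x, HasDerivAt (fun t => f t * g' t - f' t * g t) 0 x := fun x =>
    (((hf x).mul (hg' x)).sub ((hf' x).mul (hg x))).congr_deriv (by ring)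
  exact is_const_of_deriv_eq_zero (fun x => (hW x).differentiableAt) (fun x => (hW x).deriv) a b

theorem Matrix.trace_eq_add_inv_of_vecMul_eq_smul {K : Type*} [Field K]
    {M : Matrix (Fin 2) (Fin 2) K} (hdet : M.det = 1) {p : Fin 2 → K} (hp : p ≠ 0) {c : K}
    (hpM : p ᵥ* M = c • p) : M.trace = c + c⁻¹ := by
  have hCH : M ^ 2 - M.trace • M + M.det • (1 : Matrix (Fin 2) (Fin 2) K) = 0 := by
    simpa [charpoly_fin_two, Algebra.smul_def] using M.aeval_self_charpoly
  have hquad : (c ^ 2 - M.trace * c + 1) • p = 0 := by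
    have := congrArg (p ᵥ* ·) hCH
    simp only [vecMul_sub, vecMul_add, vecMul_smul, pow_two, ← vecMul_vecMul, hpM,
      smul_vecMul, vecMul_one, hdet, vecMul_zero] at this
    rw [← this]
    module
  have hc : c ^ 2 - M.trace * c + 1 = 0 := (smul_eq_zero.mp hquad).resolve_right hp
  have hc0 : c ≠ 0 := by rintro rfl; simp at hc
  field_simp
  linear_combination -hc

theorem hasDerivAt_mul_exp_of_hasDerivAt {U w : ℝ → ℂ} {w' : ℂ} {x : ℝ}
    (hU : HasDerivAt U (w x) x) (hw : HasDerivAt w w' x) :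
    HasDerivAt (fun t => w t * exp (U t)) ((w' + w x ^ 2) * exp (U x)) x :=
  (hw.mul hU.cexp).congr_deriv (by ring)

namespace IsHillFund

variable {mu : ℂ} {v : ℝ → ℂ} {Y : ℝ → Matrix (Fin 2) (Fin 2) ℂ}

theorem hasDerivAt_apply_zero (hY : IsHillFund mu v Y) (x : ℝ) (j : Fin 2) :
    HasDerivAt (fun t => Y t 0 j) (Y x 1 j) x := by
  simpa [mul_apply, Fin.sum_univ_two] using hY.2 x 0 j

theorem hasDerivAt_apply_one (hY : IsHillFund mu v Y) (x : ℝ) (j : Fin 2) :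
    HasDerivAt (fun t => Y t 1 j) ((v x - mu) * Y x 0 j) x := by
  simpa [mul_apply, Fin.sum_univ_two] using hY.2 x 1 j

theorem det_eq_one (hY : IsHillFund mu v Y) (x : ℝ) : (Y x).det = 1 := by
  rw [← det_one (n := Fin 2) (R := ℂ), ← hY.1, det_fin_two, det_fin_two]
  linear_combination wronskian_eq_of_hasDerivAt (hY.hasDerivAt_apply_zero · 0)
    (hY.hasDerivAt_apply_one · 0) (hY.hasDerivAt_apply_zero · 1) (hY.hasDerivAt_apply_one · 1) x 0

theorem vecMul_eq_vecMul (hY : IsHillFund mu v Y) {f f' : ℝ → ℂ}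
    (hf : ∀ x, HasDerivAt f (f' x) x) (hf' : ∀ x, HasDerivAt f' ((v x - mu) * f x) x) (a b : ℝ) :
    ![-f' a, f a] ᵥ* Y a = ![-f' b, f b] ᵥ* Y b := by
  ext j
  simp only [vecMul, dotProduct, Fin.sum_univ_two, cons_val_zero, cons_val_one, cons_val_fin_one]
  linear_combination wronskian_eq_of_hasDerivAt hf hf' (hY.hasDerivAt_apply_zero · j)
    (hY.hasDerivAt_apply_one · j) a b

end IsHillFund

theorem hill_discriminant_at_zero
    (u : ℝ → ℝ) (hu : ContDiff ℝ 1 u)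
    (hper : ∀ x : ℝ, u (x + 1) = u x)
    (Y : ℝ → Matrix (Fin 2) (Fin 2) ℂ)
    (hY : IsHillFund 0 (fun x => ((deriv u x : ℝ) : ℂ) + ((u x : ℝ) : ℂ) ^ 2) Y) :
    (Y 1).trace = 2 * Complex.cosh ((∫ x in (0:ℝ)..1, u x : ℝ) : ℂ) := by
  set m : ℂ := ((∫ x in (0:ℝ)..1, u x : ℝ) : ℂ)
  set U : ℝ → ℂ := fun x => ∫ t in (0:ℝ)..x, ((u t : ℝ) : ℂ)
  have hud : Differentiable ℝ u := hu.differentiable one_ne_zero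
  have hU : ∀ x, HasDerivAt U (u x) x := fun x =>
    ((continuous_ofReal.comp hud.continuous).integral_hasStrictDerivAt 0 x).hasDerivAt
  have hu' : ∀ x, HasDerivAt (fun t => ((u t : ℝ) : ℂ)) ((deriv u x : ℝ) : ℂ) x := fun x =>
    (hud x).hasDerivAt.ofReal_comp
  have hfloquet := hY.vecMul_eq_vecMul (fun x => (hU x).cexp.congr_deriv (mul_comm _ _))
    (fun x => (hasDerivAt_mul_exp_of_hasDerivAt (hU x) (hu' x)).congr_deriv (by simp)) 1 0
  have hperiod : ![-(u 1 * exp (U 1)), exp (U 1)] = exp m • ![-(u 0 : ℂ), 1] := by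
    have hU1 : U 1 = m := intervalIntegral.integral_ofReal
    simp [hU1, by simpa using hper 0, mul_comm]
  have heig : ![-(u 0 : ℂ), 1] ᵥ* Y 1 = exp (-m) • ![-(u 0 : ℂ), 1] := by
    rw [hperiod, smul_vecMul, ← eq_inv_smul_iff₀ (exp_ne_zero m)] at hfloquet
    simpa [U, hY.1, Complex.exp_neg] using hfloquet
  rw [trace_eq_add_inv_of_vecMul_eq_smul (hY.det_eq_one 1) (by simp) heig, two_cosh,
    Complex.exp_neg, inv_inv, add_comm]
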